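/- Let k be a field of characteristic ≠ 2 containing a square root of −1, let n ≥ 2 be even, let K = k(x_1, …, x_n), set x_0 = x_1⋯x_n, and let q'_0 = ⟨1, x_0, x_1, …, x_n⟩. Then q'_0 ∈ I²(K) and Pf_2(q'_0) = n − 1. -/

import Mathlib

/-!
Since `-1` is a square, `W(K)` has characteristic two, so `⟨⟨a, b⟩⟩ = ⟨1, a⟩ + ⟨1, b⟩ + ⟨1, ab⟩`.
Telescoping along the partial products `x₁ ⋯ xⱼ` then writes `q'₀` as a sum of `n - 1` two-fold
Pfister forms.

For the lower bound, the exponent of the lexicographically leading monomial of a rational function,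
read modulo two, is a character `Kˣ → 𝔽₂ⁿ` for which two of `v a`, `v b`, `v (a + b)` always agree.
Such a character induces a ring map `W(K) → 𝔽₂[𝔽₂ⁿ]` sending `q'₀` to
`1 + x^(1,…,1) + ∑ x^(eᵢ)` and `⟨⟨a, b⟩⟩` to `(1 + x^γ)(1 + x^δ)`. In a decomposition of the
former into such products, a linear map collapsing two coordinates kills one nondegenerate summand
and turns the left side into its analogue in dimension `n - 2`; induction together with a parity
count of the nondegenerate summands shows that there are at least `n - 1` of them.
-/

/-- The image of the one-dimensional form `⟨a⟩` in the integral group ring `ℤ[kˣ]`. -/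
noncomputable def genElt (k : Type*) [Field k] (a : kˣ) : MonoidAlgebra ℤ kˣ :=
  MonoidAlgebra.of ℤ kˣ a

/-- The ideal of Witt relations in `ℤ[kˣ]`: the square-class relations `⟨u²⟩ = ⟨1⟩`,
the hyperbolic relation `⟨1⟩ + ⟨-1⟩ = 0`, and the chain relations
`⟨a⟩ + ⟨b⟩ = ⟨c⟩ + ⟨abc⟩` whenever `a + b = c ≠ 0` in `k`.  By Witt's presentation
theorem, the quotient of `ℤ[kˣ]` by this ideal is the Witt ring `W(k)`. -/
noncomputable def wittRel (k : Type*) [Field k] : Ideal (MonoidAlgebra ℤ kˣ) :=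
  Ideal.span (insert (genElt k 1 + genElt k (-1))
    ({x | ∃ u : kˣ, x = genElt k (u ^ 2) - genElt k 1} ∪
     {x | ∃ a b c : kˣ, (a : k) + (b : k) = (c : k) ∧
        x = genElt k a + genElt k b - genElt k c - genElt k (a * b * c)}))

/-- The Witt ring `W(k)`, via Witt's presentation. -/
abbrev WittRing (k : Type*) [Field k] := MonoidAlgebra ℤ kˣ ⧸ wittRel k

/-- The Witt class of the one-dimensional form `⟨a⟩`. -/
noncomputable def wcls (k : Type*) [Field k] (a : kˣ) : WittRing k :=
  Ideal.Quotient.mk (wittRel k) (genElt k a)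

/-- The Witt class of the diagonal quadratic form `⟨q 0, …, q (n-1)⟩`. -/
noncomputable def wclassOf (k : Type*) [Field k] {n : ℕ} (q : Fin n → kˣ) : WittRing k :=
  ∑ i, wcls k (q i)

/-- The fundamental ideal `I(k)`, generated by the classes of even-dimensional forms. -/
noncomputable def fundIdeal (k : Type*) [Field k] : Ideal (WittRing k) :=
  Ideal.span {x | ∃ a b : kˣ, x = wcls k a + wcls k b}

/-- The diagonal form `⟨q 0, …, q (n-1)⟩` represents `1`. -/
def RepresentsOne (k : Type*) [Field k] {n : ℕ} (q : Fin n → kˣ) : Prop :=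
  ∃ c : Fin n → k, ∑ i, (q i : k) * c i ^ 2 = 1

/-- The diagonal form `⟨q 0, …, q (n-1)⟩` is anisotropic. -/
def Anisotropic (k : Type*) [Field k] {n : ℕ} (q : Fin n → kˣ) : Prop :=
  ∀ c : Fin n → k, ∑ i, (q i : k) * c i ^ 2 = 0 → c = 0

/-- Witt classes of 1-fold Pfister forms `⟨1, a⟩`. -/
def IsPfister1W (k : Type*) [Field k] (x : WittRing k) : Prop :=
  ∃ a : kˣ, x = wcls k 1 + wcls k a

/-- Witt classes of 2-fold Pfister forms `⟨⟨a, b⟩⟩ = ⟨1,a⟩ ⊗ ⟨1,b⟩`. -/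
def IsPfister2W (k : Type*) [Field k] (x : WittRing k) : Prop :=
  ∃ a b : kˣ, x = (wcls k 1 + wcls k a) * (wcls k 1 + wcls k b)

/-- `x` is a sum of `r` Witt classes of 1-fold Pfister forms. -/
def Pf1In (k : Type*) [Field k] (x : WittRing k) (r : ℕ) : Prop :=
  ∃ f : Fin r → WittRing k, (∀ i, IsPfister1W k (f i)) ∧ x = ∑ i, f i

/-- `x` is a sum of `r` Witt classes of 2-fold Pfister forms. -/
def Pf2In (k : Type*) [Field k] (x : WittRing k) (r : ℕ) : Prop :=
  ∃ f : Fin r → WittRing k, (∀ i, IsPfister2W k (f i)) ∧ x = ∑ i, f i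

/-- The 1-Pfister number of a Witt class: the least number of 1-fold Pfister forms
whose sum is the given class. -/
noncomputable def Pf1Num (k : Type*) [Field k] (x : WittRing k) : ℕ :=
  sInf {r | Pf1In k x r}

/-- The 2-Pfister number of a Witt class: the least number of 2-fold Pfister forms
whose sum is the given class. -/
noncomputable def Pf2Num (k : Type*) [Field k] (x : WittRing k) : ℕ :=
  sInf {r | Pf2In k x r}

/-- `k` contains a square root of `-1`. -/
def HasSqrtNegOne (k : Type*) [Field k] : Prop := ∃ i : k, i * i = -1

section WittRelations

variable (F : Type*) [Field F]

lemma wcls_one : wcls F 1 = 1 := by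
  rw [wcls, genElt, map_one, map_one]

lemma wcls_mul (a b : Fˣ) : wcls F (a * b) = wcls F a * wcls F b := by
  simp only [wcls, genElt, map_mul]

lemma one_add_wcls_neg_one : 1 + wcls F (-1) = 0 := by
  rw [← wcls_one, wcls, wcls, ← map_add]
  exact Ideal.Quotient.eq_zero_iff_mem.mpr (Ideal.subset_span (Set.mem_insert _ _))

lemma wcls_sq (u : Fˣ) : wcls F (u ^ 2) = 1 := by
  rw [← wcls_one, ← sub_eq_zero, wcls, wcls, ← map_sub]
  exact Ideal.Quotient.eq_zero_iff_mem.mpr (Ideal.subset_span (Or.inr (Or.inl ⟨u, rfl⟩)))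

variable {F}

lemma WittRing.add_self_eq_zero (hsq : HasSqrtNegOne F) (z : WittRing F) : z + z = 0 := by
  obtain ⟨i, hi⟩ := hsq
  have hi0 : i ≠ 0 := by rintro rfl; simp at hi
  have hneg : Units.mk0 i hi0 ^ 2 = -1 := Units.ext (by simp [sq, hi])
  have h : (1 : WittRing F) + 1 = 0 := by
    simpa [← hneg, wcls_sq] using one_add_wcls_neg_one F
  linear_combination z * h

noncomputable def WittRing.lift {A : Type*} [CommRing A] [Algebra (ZMod 2) A] (ψ : Fˣ →* A)
    (hsq : ∀ u, ψ u ^ 2 = 1) (hneg : ψ (-1) = 1)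
    (hrel : ∀ a b c : Fˣ, (a : F) + b = c → ψ a = ψ b ∨ ψ c = ψ a ∨ ψ c = ψ b) :
    WittRing F →+* A :=
  Ideal.Quotient.lift (wittRel F) (MonoidAlgebra.lift ℤ A Fˣ ψ).toRingHom <| by
    have hlift (a : Fˣ) : (MonoidAlgebra.lift ℤ A Fˣ ψ).toRingHom (genElt F a) = ψ a :=
      MonoidAlgebra.lift_of _ _
    have h2 (x : A) : x + x = 0 := ZModModule.add_self x
    intro x hx
    rw [← RingHom.mem_ker]
    refine (Ideal.span_le.mpr ?_) hx
    rintro _ (rfl | ⟨u, rfl⟩ | ⟨a, b, c, habc, rfl⟩) <;>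
      simp only [SetLike.mem_coe, RingHom.mem_ker, map_add, map_sub, hlift, map_mul, map_pow,
        map_one, hneg, hsq, h2, sub_self]
    rcases hrel a b c habc with h | h | h <;> rw [h]
    · linear_combination h2 (ψ b) - h2 (ψ c) - ψ c * hsq b
    · linear_combination -ψ b * hsq a
    · linear_combination -ψ a * hsq b

lemma WittRing.lift_wcls {A : Type*} [CommRing A] [Algebra (ZMod 2) A] (ψ : Fˣ →* A)
    (hsq : ∀ u, ψ u ^ 2 = 1) (hneg : ψ (-1) = 1)
    (hrel : ∀ a b c : Fˣ, (a : F) + b = c → ψ a = ψ b ∨ ψ c = ψ a ∨ ψ c = ψ b) (a : Fˣ) :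
    WittRing.lift ψ hsq hneg hrel (wcls F a) = ψ a :=
  MonoidAlgebra.lift_of _ _

end WittRelations

section UpperBound

variable {F : Type*} [Field F]

lemma Pf2In.zero : Pf2In F 0 0 :=
  ⟨Fin.elim0, fun i => i.elim0, by simp⟩

lemma Pf2In.snoc {x y : WittRing F} {r : ℕ} (hx : Pf2In F x r) (hy : IsPfister2W F y) :
    Pf2In F (x + y) (r + 1) := by
  obtain ⟨f, hf, rfl⟩ := hx
  refine ⟨Fin.snoc f y, Fin.lastCases (by simpa using hy) (by simpa using hf), ?_⟩
  simp [Fin.sum_univ_castSucc]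

lemma mem_fundIdeal_sq_of_pf2In {x : WittRing F} {r : ℕ} (hx : Pf2In F x r) :
    x ∈ fundIdeal F ^ 2 := by
  obtain ⟨f, hf, rfl⟩ := hx
  refine Ideal.sum_mem _ fun j _ => ?_
  obtain ⟨a, b, hab⟩ := hf j
  rw [hab, Submodule.pow_succ, Submodule.pow_one]
  exact Ideal.mul_mem_mul (Ideal.subset_span ⟨1, a, rfl⟩) (Ideal.subset_span ⟨1, b, rfl⟩)

lemma one_add_wcls_mul (hsq : HasSqrtNegOne F) (a b : Fˣ) :
    1 + wcls F (a * b) =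
      (1 + wcls F a) + (1 + wcls F b) + (1 + wcls F a) * (1 + wcls F b) := by
  have h2 := WittRing.add_self_eq_zero hsq
  linear_combination -h2 1 - h2 (wcls F a) - h2 (wcls F b) + wcls_mul F a b

lemma pf2In_one_add_wcls_prod (hsq : HasSqrtNegOne F) (m : ℕ) (a : Fin (m + 1) → Fˣ) :
    Pf2In F ((1 + wcls F (∏ i, a i)) + ∑ i, (1 + wcls F (a i))) m := by
  induction m with
  | zero =>
    simpa [WittRing.add_self_eq_zero hsq] using Pf2In.zero
  | succ m ih =>
    have key := (ih (fun i => a i.castSucc)).snoc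
      ⟨∏ i : Fin (m + 1), a i.castSucc, a (Fin.last _), by rw [wcls_one]⟩
    convert key using 1
    rw [Fin.prod_univ_castSucc, Fin.sum_univ_castSucc, one_add_wcls_mul hsq]
    linear_combination WittRing.add_self_eq_zero hsq (1 + wcls F (a (Fin.last _)))

lemma pf2In_generic (hsq : HasSqrtNegOne F) {n : ℕ} (hev : Even n) (a : Fin n → Fˣ) :
    Pf2In F (wclassOf F (Fin.cons 1 (Fin.cons (∏ i, a i) a))) (n - 1) := by
  have hones : ∑ _i : Fin n, (1 : WittRing F) = 0 := by
    obtain ⟨t, ht⟩ := hev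
    rw [Finset.sum_const, Finset.card_univ, Fintype.card_fin, ht, add_nsmul,
      WittRing.add_self_eq_zero hsq]
  have hq : wclassOf F (Fin.cons 1 (Fin.cons (∏ i, a i) a)) =
      (1 + wcls F (∏ i, a i)) + ∑ i, (1 + wcls F (a i)) := by
    simp only [wclassOf, Fin.sum_univ_succ, Fin.cons_zero, Fin.cons_succ, wcls_one,
      Finset.sum_add_distrib, hones]
    ring
  rw [hq]
  cases n with
  | zero => simpa [wcls_one, WittRing.add_self_eq_zero hsq] using Pf2In.zero
  | succ m => exact pf2In_one_add_wcls_prod hsq m a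

end UpperBound

section FractionExtension

variable {R K G : Type*} [CommRing R] [IsDomain R] [Field K] [Algebra R K] [IsFractionRing R K]
  [AddCommGroup G] {d : R → G}

variable (K) in
noncomputable def extendFrac (d : R → G) (z : K) : G :=
  d (IsLocalization.sec (nonZeroDivisors R) z).1 - d (IsLocalization.sec (nonZeroDivisors R) z).2

lemma extendFrac_div (hd : ∀ {f g : R}, f ≠ 0 → g ≠ 0 → d (f * g) = d f + d g)
    {f g : R} (hf : f ≠ 0) (hg : g ≠ 0) :
    extendFrac K d (algebraMap R K f / algebraMap R K g) = d f - d g := by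
  have hinj := IsFractionRing.injective R K
  have hspec := IsLocalization.sec_spec (nonZeroDivisors R) (algebraMap R K f / algebraMap R K g)
  set a := (IsLocalization.sec (nonZeroDivisors R) (algebraMap R K f / algebraMap R K g)).1
  set b := ((IsLocalization.sec (nonZeroDivisors R) (algebraMap R K f / algebraMap R K g)).2 : R)
  have hb : b ≠ 0 := nonZeroDivisors.coe_ne_zero _
  have hcross : f * b = a * g := by
    apply hinj
    rw [map_mul, map_mul, ← hspec]
    field_simp [(map_ne_zero_iff _ hinj).mpr hg]
  have ha : a ≠ 0 := fun ha => by simp [ha, hf, hb] at hcross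
  rw [extendFrac, sub_eq_sub_iff_add_eq_add, ← hd hf hb, ← hd ha hg, hcross]

lemma extendFrac_algebraMap (hd : ∀ {f g : R}, f ≠ 0 → g ≠ 0 → d (f * g) = d f + d g)
    {f : R} (hf : f ≠ 0) : extendFrac K d (algebraMap R K f) = d f := by
  have h1 : d 1 = 0 := by simpa using hd one_ne_zero one_ne_zero
  simpa [h1] using extendFrac_div (K := K) hd hf one_ne_zero

lemma exists_eq_div (z : K) : ∃ f g : R, g ≠ 0 ∧ z = algebraMap R K f / algebraMap R K g := by
  obtain ⟨f, g, hg, rfl⟩ := IsFractionRing.div_surjective R z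
  exact ⟨f, g, nonZeroDivisors.ne_zero hg, rfl⟩

lemma extendFrac_mul (hd : ∀ {f g : R}, f ≠ 0 → g ≠ 0 → d (f * g) = d f + d g)
    {z w : K} (hz : z ≠ 0) (hw : w ≠ 0) :
    extendFrac K d (z * w) = extendFrac K d z + extendFrac K d w := by
  obtain ⟨f₁, g₁, hg₁, rfl⟩ := exists_eq_div (R := R) z
  obtain ⟨f₂, g₂, hg₂, rfl⟩ := exists_eq_div (R := R) w
  have hf₁ : f₁ ≠ 0 := by rintro rfl; simp at hz
  have hf₂ : f₂ ≠ 0 := by rintro rfl; simp at hw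
  rw [div_mul_div_comm, ← map_mul, ← map_mul, extendFrac_div hd (mul_ne_zero hf₁ hf₂)
    (mul_ne_zero hg₁ hg₂), extendFrac_div hd hf₁ hg₁, extendFrac_div hd hf₂ hg₂, hd hf₁ hf₂,
    hd hg₁ hg₂]
  abel

/-- Over a common denominator, a relation `a + b = c` in `K` becomes one in `R`. -/
lemma extendFrac_add_cases (hd : ∀ {f g : R}, f ≠ 0 → g ≠ 0 → d (f * g) = d f + d g)
    (hadd : ∀ f g : R, d f = d g ∨ d (f + g) = d f ∨ d (f + g) = d g)
    {a b : K} (ha : a ≠ 0) (hb : b ≠ 0) (hab : a + b ≠ 0) :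
    extendFrac K d a = extendFrac K d b ∨ extendFrac K d (a + b) = extendFrac K d a ∨
      extendFrac K d (a + b) = extendFrac K d b := by
  obtain ⟨f₁, g₁, hg₁, rfl⟩ := exists_eq_div (R := R) a
  obtain ⟨f₂, g₂, hg₂, rfl⟩ := exists_eq_div (R := R) b
  have hinj := IsFractionRing.injective R K
  have hf₁ : f₁ ≠ 0 := by rintro rfl; simp at ha
  have hf₂ : f₂ ≠ 0 := by rintro rfl; simp at hb
  have hg (g : R) (hg : g ≠ 0) : algebraMap R K g ≠ 0 := (map_ne_zero_iff _ hinj).mpr hg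
  have hsum : algebraMap R K f₁ / algebraMap R K g₁ + algebraMap R K f₂ / algebraMap R K g₂ =
      algebraMap R K (f₁ * g₂ + f₂ * g₁) / algebraMap R K (g₁ * g₂) := by
    simp only [map_add, map_mul]
    field_simp [hg g₁ hg₁, hg g₂ hg₂]
  have hA : algebraMap R K f₁ / algebraMap R K g₁ =
      algebraMap R K (f₁ * g₂) / algebraMap R K (g₁ * g₂) := by
    rw [map_mul, map_mul, mul_div_mul_right _ _ (hg g₂ hg₂)]
  have hB : algebraMap R K f₂ / algebraMap R K g₂ =
      algebraMap R K (f₂ * g₁) / algebraMap R K (g₁ * g₂) := by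
    rw [map_mul, map_mul, mul_comm (algebraMap R K g₁), mul_div_mul_right _ _ (hg g₁ hg₁)]
  have hsum0 : f₁ * g₂ + f₂ * g₁ ≠ 0 := by rintro h; simp [hsum, h] at hab
  have hD := mul_ne_zero hg₁ hg₂
  rw [hsum, hA, hB, extendFrac_div hd (mul_ne_zero hf₁ hg₂) hD,
    extendFrac_div hd (mul_ne_zero hf₂ hg₁) hD, extendFrac_div hd hsum0 hD]
  simpa only [sub_left_inj] using hadd (f₁ * g₂) (f₂ * g₁)

end FractionExtension

section ParityDegree

open AddMonoidAlgebra

variable {σ k : Type*} [CommRing k] (m : MonomialOrder σ)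

noncomputable def parityDegree (f : MvPolynomial σ k) : σ → ZMod 2 :=
  fun i => (m.degree f i : ZMod 2)

lemma parityDegree_add_cases (f g : MvPolynomial σ k) :
    parityDegree m f = parityDegree m g ∨ parityDegree m (f + g) = parityDegree m f ∨
      parityDegree m (f + g) = parityDegree m g := by
  rcases lt_trichotomy (m.toSyn (m.degree f)) (m.toSyn (m.degree g)) with h | h | h
  · right; right
    unfold parityDegree
    rw [MonomialOrder.degree_add_eq_right_of_lt h]
  · left
    unfold parityDegree
    rw [m.toSyn.injective h]
  · right; left
    unfold parityDegree
    rw [MonomialOrder.degree_add_of_lt h]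

lemma parityDegree_X [Nontrivial k] [DecidableEq σ] (i : σ) :
    parityDegree m (MvPolynomial.X i : MvPolynomial σ k) = Pi.single i 1 := by
  ext j
  simp [parityDegree, MonomialOrder.degree_X, Finsupp.single_apply, Pi.single_apply, eq_comm]

lemma parityDegree_one : parityDegree m (1 : MvPolynomial σ k) = 0 := by
  ext i
  simp [parityDegree]

lemma parityDegree_neg_one : parityDegree m (-1 : MvPolynomial σ k) = 0 := by
  ext i
  simp [parityDegree, MonomialOrder.degree_neg]

variable [IsDomain k]

lemma parityDegree_mul {f g : MvPolynomial σ k} (hf : f ≠ 0) (hg : g ≠ 0) :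
    parityDegree m (f * g) = parityDegree m f + parityDegree m g := by
  ext i
  simp [parityDegree, MonomialOrder.degree_mul hf hg]

variable (K : Type*) [Field K] [Algebra (MvPolynomial σ k) K] [IsFractionRing (MvPolynomial σ k) K]

variable (k) in
noncomputable def parityCharacter : Kˣ →* (ZMod 2)[σ → ZMod 2] where
  toFun u := single (extendFrac K (parityDegree (k := k) m) u) 1
  map_one' := by
    rw [Units.val_one, ← map_one (algebraMap (MvPolynomial σ k) K),
      extendFrac_algebraMap (parityDegree_mul m) one_ne_zero, parityDegree_one, one_def]
  map_mul' u v := by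
    rw [Units.val_mul, extendFrac_mul (parityDegree_mul m) u.ne_zero v.ne_zero, single_mul_single,
      mul_one]

lemma parityCharacter_apply (u : Kˣ) :
    parityCharacter k m K u = single (extendFrac K (parityDegree (k := k) m) u) 1 := rfl

variable (k) in
noncomputable def parityHom : WittRing K →+* (ZMod 2)[σ → ZMod 2] :=
  WittRing.lift (parityCharacter k m K)
    (fun u => by
      rw [parityCharacter_apply, sq, single_mul_single, ZModModule.add_self, mul_one, one_def])
    (by
      rw [parityCharacter_apply, Units.val_neg, Units.val_one,
        ← map_one (algebraMap (MvPolynomial σ k) K), ← map_neg,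
        extendFrac_algebraMap (parityDegree_mul m) (neg_ne_zero.mpr one_ne_zero),
        parityDegree_neg_one, one_def])
    (fun a b c habc => by
      simp only [parityCharacter_apply, ← habc]
      rcases extendFrac_add_cases (parityDegree_mul (k := k) m) (parityDegree_add_cases m)
        a.ne_zero b.ne_zero (habc ▸ c.ne_zero) with h | h | h <;> simp [h])

lemma parityHom_wcls (a : Kˣ) : parityHom k m K (wcls K a) = parityCharacter k m K a :=
  WittRing.lift_wcls _ _ _ _ a

end ParityDegree

section ParityAlgebra

open AddMonoidAlgebra Finset

section Pfister

variable {V : Type*} [AddCommGroup V]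

noncomputable def pfisterImage (γ δ : V) : (ZMod 2)[V] :=
  (1 + single γ 1) * (1 + single δ 1)

def Nondegenerate (γ δ : V) : Prop :=
  γ ≠ 0 ∧ δ ≠ 0 ∧ γ ≠ δ

lemma pfisterImage_eq (γ δ : V) :
    pfisterImage γ δ = 1 + single γ 1 + single δ 1 + single (γ + δ) 1 := by
  rw [pfisterImage, add_mul, one_mul, mul_one_add, single_mul_single, mul_one]
  ring

lemma pfisterImage_eq_zero [Module (ZMod 2) V] {γ δ : V} (h : ¬ Nondegenerate γ δ) :
    pfisterImage γ δ = 0 := by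
  simp only [Nondegenerate, not_and_or, not_not] at h
  rcases h with rfl | rfl | rfl
  · rw [pfisterImage, ← one_def, ZModModule.add_self, zero_mul]
  · rw [pfisterImage, ← one_def, ZModModule.add_self, mul_zero]
  · rw [pfisterImage_eq, ZModModule.add_self, ← one_def, add_assoc (1 : (ZMod 2)[V]),
      ZModModule.add_self, add_zero, ZModModule.add_self]

lemma coeff_pfisterImage_zero [Module (ZMod 2) V] {γ δ : V} (h : Nondegenerate γ δ) :
    (pfisterImage γ δ).coeff 0 = 1 := by
  obtain ⟨hγ, hδ, hγδ⟩ := h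
  have hsum : γ + δ ≠ 0 := fun h' =>
    hγδ (by rwa [add_eq_zero_iff_eq_neg, ZModModule.neg_eq_self] at h')
  simp [pfisterImage_eq, one_def, hγ.symm, hδ.symm, hsum.symm]

lemma Nondegenerate.of_map {W : Type*} [AddCommGroup W] (L : V →+ W) {γ δ : V}
    (h : Nondegenerate (L γ) (L δ)) : Nondegenerate γ δ := by
  obtain ⟨hγ, hδ, hγδ⟩ := h
  exact ⟨fun h' => hγ (by rw [h', map_zero]), fun h' => hδ (by rw [h', map_zero]),
    fun h' => hγδ (by rw [h'])⟩

lemma mapDomainRingHom_pfisterImage {W : Type*} [AddCommGroup W] (L : V →+ W) (γ δ : V) :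
    mapDomainRingHom (ZMod 2) L (pfisterImage γ δ) = pfisterImage (L γ) (L δ) := by
  simp only [pfisterImage, map_mul, map_add, map_one, mapDomainRingHom_apply, mapDomain_single]

end Pfister

variable {ι : Type*}

variable (ι) in
/-- The image of the generic form `⟨1, x₁⋯xₙ, x₁, …, xₙ⟩`. -/
noncomputable def genericImage [Fintype ι] [DecidableEq ι] : (ZMod 2)[ι → ZMod 2] :=
  1 + single 1 1 + ∑ i, single (Pi.single i 1) 1

lemma coeff_genericImage_zero [Fintype ι] [DecidableEq ι] [Nonempty ι] :
    (genericImage ι).coeff 0 = 1 := by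
  have hone : (1 : ι → ZMod 2) ≠ 0 := one_ne_zero
  have hsingle (i : ι) : (Pi.single i 1 : ι → ZMod 2) ≠ 0 := by simp
  simp [genericImage, one_def, hone.symm, fun i => (hsingle i).symm]

open scoped Classical in
lemma odd_card_nondegenerate [Fintype ι] [DecidableEq ι] [Nonempty ι] {J : Type*} [Fintype J]
    {γ δ : J → ι → ZMod 2}
    (h : genericImage ι = ∑ j, pfisterImage (γ j) (δ j)) :
    Odd #{j | Nondegenerate (γ j) (δ j)} := by
  rw [← ZMod.natCast_eq_one_iff_odd, ← coeff_genericImage_zero (ι := ι), h, coeff_sum,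
    Finsupp.finsetSum_apply, Finset.natCast_card_filter]
  refine Finset.sum_congr rfl fun j _ => ?_
  by_cases hj : Nondegenerate (γ j) (δ j)
  · rw [if_pos hj, coeff_pfisterImage_zero hj]
  · rw [if_neg hj, pfisterImage_eq_zero hj, coeff_zero, Finsupp.zero_apply]

lemma exists_apply_eq_one_and_apply_eq_zero {u : ι → ZMod 2} (h0 : u ≠ 0) (h1 : u ≠ 1) :
    ∃ p q, u p = 1 ∧ u q = 0 := by
  obtain ⟨p, hp⟩ := Function.ne_iff.mp h0
  obtain ⟨q, hq⟩ := Function.ne_iff.mp h1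
  have h0 : ∀ a : ZMod 2, a ≠ 0 → a = 1 := by decide
  have h1 : ∀ a : ZMod 2, a ≠ 1 → a = 0 := by decide
  exact ⟨p, q, h0 _ hp, h1 _ hq⟩

lemma Nondegenerate.exists_ne_zero_ne_one {γ δ : ι → ZMod 2} (h : Nondegenerate γ δ) :
    ∃ u, (u = γ ∨ u = δ) ∧ u ≠ 0 ∧ u ≠ 1 := by
  obtain ⟨hγ, hδ, hγδ⟩ := h
  by_cases hγ1 : γ = 1
  · exact ⟨δ, Or.inr rfl, hδ, fun h1 => hγδ (hγ1.trans h1.symm)⟩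
  · exact ⟨γ, Or.inl rfl, hγ, hγ1⟩

section Collapse

variable (u : ι → ZMod 2) (p q : ι)

/-- Collapsing the coordinates `p` and `q`: when `u p = 1` and `u q = 0` this kills `u`, fixes the
all-ones vector and sends both `eₚ` and `e_q` to `u`. -/
def collapse : (ι → ZMod 2) →+ ({i : ι // i ≠ p ∧ i ≠ q} → ZMod 2) where
  toFun v i := v i + (v p + v q) * u i
  map_zero' := by ext; simp
  map_add' v w := by ext; simp only [Pi.add_apply]; ring

lemma collapse_self (hp : u p = 1) (hq : u q = 0) : collapse u p q u = 0 := by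
  ext i
  simp [collapse, hp, hq, ZModModule.add_self]

lemma collapse_one : collapse u p q 1 = 1 := by
  ext i
  simp [collapse, ZModModule.add_self]

lemma collapse_single_of_ne [DecidableEq ι] (i : {i : ι // i ≠ p ∧ i ≠ q}) :
    collapse u p q (Pi.single i 1) = Pi.single i 1 := by
  ext j
  simp [collapse, Pi.single_apply, i.2.1, i.2.2, Subtype.ext_iff]

lemma collapse_single_left [DecidableEq ι] (hpq : p ≠ q) :
    collapse u p q (Pi.single p 1) = fun i => u i.1 := by
  ext i
  simp [collapse, i.2.1, hpq.symm]

lemma collapse_single_right [DecidableEq ι] (hpq : p ≠ q) :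
    collapse u p q (Pi.single q 1) = fun i => u i.1 := by
  ext i
  simp [collapse, i.2.2, hpq]

lemma mapDomainRingHom_collapse_genericImage [Fintype ι] [DecidableEq ι] (hpq : p ≠ q) :
    mapDomainRingHom (ZMod 2) (collapse u p q) (genericImage ι) =
      genericImage {i : ι // i ≠ p ∧ i ≠ q} := by
  have hsplit := Finset.add_sum_erase _
    (fun i => single (Pi.single i 1 : ι → ZMod 2) (1 : ZMod 2)) (Finset.mem_univ p)
  rw [← Finset.add_sum_erase _ _ (Finset.mem_erase.mpr ⟨hpq.symm, Finset.mem_univ q⟩),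
    ← add_assoc] at hsplit
  rw [genericImage, genericImage, ← hsplit, Finset.sum_subtype _ (p := fun i => i ≠ p ∧ i ≠ q)
    (F := inferInstance) (by simp [and_comm])]
  simp only [map_add, map_one, map_sum, mapDomainRingHom_apply, mapDomain_single, collapse_one,
    collapse_single_left u p q hpq, collapse_single_right u p q hpq, collapse_single_of_ne,
    ZModModule.add_self, zero_add]

end Collapse

lemma card_subtype_ne_and_ne [Fintype ι] [DecidableEq ι] {p q : ι} (hpq : p ≠ q) :
    Fintype.card {i : ι // i ≠ p ∧ i ≠ q} = Fintype.card ι - 2 := by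
  simp [Fintype.card_subtype, Finset.filter_and, Finset.filter_ne', Finset.card_erase_of_mem, hpq]
  omega

open scoped Classical in
/-- Collapsing two coordinates chosen from a nondegenerate summand kills that summand and lowers
`card ι` by two; since the number of nondegenerate summands is odd, this loses nothing. -/
theorem card_le_card_nondegenerate_add_one {ι J : Type*} [Fintype ι] [DecidableEq ι] [Fintype J]
    (hev : Even (Fintype.card ι)) {γ δ : J → ι → ZMod 2}
    (h : genericImage ι = ∑ j, pfisterImage (γ j) (δ j)) :
    Fintype.card ι ≤ #{j | Nondegenerate (γ j) (δ j)} + 1 := by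
  obtain ⟨N, hN⟩ : ∃ N, Fintype.card ι = N := ⟨_, rfl⟩
  induction N using Nat.strong_induction_on generalizing ι γ δ with
  | _ N ih =>
  rcases isEmpty_or_nonempty ι with hι | hι
  · simp [Fintype.card_eq_zero]
  have hodd := odd_card_nondegenerate h
  obtain ⟨j₀, hj₀⟩ : ∃ j₀, Nondegenerate (γ j₀) (δ j₀) := by
    simpa [Finset.Nonempty] using Finset.card_pos.mp hodd.pos
  obtain ⟨u, hu, hu0, hu1⟩ := hj₀.exists_ne_zero_ne_one
  obtain ⟨p, q, hp, hq⟩ := exists_apply_eq_one_and_apply_eq_zero hu0 hu1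
  have hpq : p ≠ q := fun hpq => by simp [hpq, hq] at hp
  have hsub : #{j | Nondegenerate (collapse u p q (γ j)) (collapse u p q (δ j))} ≤
      #{j | Nondegenerate (γ j) (δ j)} - 1 := by
    have hmem : j₀ ∈ ({j | Nondegenerate (γ j) (δ j)} : Finset J) := by simpa using hj₀
    rw [← Finset.card_erase_of_mem hmem]
    refine Finset.card_le_card fun j hj => ?_
    have hj := (Finset.mem_filter.mp hj).2
    refine Finset.mem_erase.mpr ⟨?_, Finset.mem_filter.mpr ⟨Finset.mem_univ _, hj.of_map⟩⟩
    rintro rfl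
    rcases hu with rfl | rfl
    · exact hj.1 (collapse_self _ p q hp hq)
    · exact hj.2.1 (collapse_self _ p q hp hq)
  have hpos : 0 < N := hN ▸ Fintype.card_pos
  have hrec := ih (N - 2) (by omega) (ι := {i : ι // i ≠ p ∧ i ≠ q})
    (γ := fun j => collapse u p q (γ j)) (δ := fun j => collapse u p q (δ j))
    (by rw [card_subtype_ne_and_ne hpq]; exact hN ▸ hev.tsub even_two)
    (by rw [← mapDomainRingHom_collapse_genericImage u p q hpq, h, map_sum]
        simp only [mapDomainRingHom_pfisterImage])
    (by rw [card_subtype_ne_and_ne hpq, hN])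
  rw [card_subtype_ne_and_ne hpq] at hrec
  obtain ⟨t, ht⟩ := hev
  obtain ⟨s, hs⟩ := hodd
  omega

end ParityAlgebra

section GenericForm

open AddMonoidAlgebra

variable {k : Type*} [CommRing k] [IsDomain k] {n : ℕ} {K : Type*} [Field K]
  [Algebra (MvPolynomial (Fin n) k) K] [IsFractionRing (MvPolynomial (Fin n) k) K]

lemma parityHom_generic {x : Fin n → Kˣ}
    (hx : ∀ i, (x i : K) = algebraMap (MvPolynomial (Fin n) k) K (MvPolynomial.X i)) :
    parityHom k MonomialOrder.lex K (wclassOf K (Fin.cons 1 (Fin.cons (∏ i, x i) x))) =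
      genericImage (Fin n) := by
  have hxi (i : Fin n) :
      parityCharacter k MonomialOrder.lex K (x i) = single (Pi.single i 1) 1 := by
    rw [parityCharacter_apply, hx, extendFrac_algebraMap (parityDegree_mul _)
      (MvPolynomial.X_ne_zero i), parityDegree_X]
  simp only [wclassOf, Fin.sum_univ_succ, Fin.cons_zero, Fin.cons_succ, map_add, map_sum,
    parityHom_wcls, map_one, map_prod, hxi, prod_single, Finset.univ_sum_single,
    Finset.prod_const_one]
  rw [genericImage, add_assoc]
  rfl

lemma sub_one_le_of_pf2In_generic (hev : Even n) {x : Fin n → Kˣ}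
    (hx : ∀ i, (x i : K) = algebraMap (MvPolynomial (Fin n) k) K (MvPolynomial.X i)) {r : ℕ}
    (h : Pf2In K (wclassOf K (Fin.cons 1 (Fin.cons (∏ i, x i) x))) r) :
    n - 1 ≤ r := by
  classical
  obtain ⟨f, hf, hsum⟩ := h
  choose a b hab using hf
  set e := extendFrac K (parityDegree (k := k) (MonomialOrder.lex : MonomialOrder (Fin n)))
  have himage : genericImage (Fin n) = ∑ j, pfisterImage (e (a j)) (e (b j)) := by
    rw [← parityHom_generic hx, hsum, map_sum]
    refine Finset.sum_congr rfl fun j _ => ?_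
    rw [hab, map_mul, map_add, map_add, parityHom_wcls, parityHom_wcls, parityHom_wcls, map_one]
    rfl
  have hbound := card_le_card_nondegenerate_add_one (by simpa using hev) himage
  have hcard := Finset.card_filter_le (Finset.univ : Finset (Fin r))
    (fun j => Nondegenerate (e (a j)) (e (b j)))
  simp only [Fintype.card_fin, Finset.card_univ] at hbound hcard
  omega

end GenericForm

lemma HasSqrtNegOne.map {k L : Type*} [Field k] [Field L] (f : k →+* L) (h : HasSqrtNegOne k) :
    HasSqrtNegOne L := by
  obtain ⟨i, hi⟩ := h
  exact ⟨f i, by rw [← map_mul, hi, map_neg, map_one]⟩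

theorem pf2_generic_even_general (k : Type*) [Field k]
    (hsq : HasSqrtNegOne k) (n : ℕ) (hev : Even n)
    (x : Fin n → (FractionRing (MvPolynomial (Fin n) k))ˣ)
    (hx : ∀ i, (x i : FractionRing (MvPolynomial (Fin n) k)) =
      algebraMap (MvPolynomial (Fin n) k) (FractionRing (MvPolynomial (Fin n) k))
        (MvPolynomial.X i)) :
    wclassOf (FractionRing (MvPolynomial (Fin n) k))
        (Fin.cons 1 (Fin.cons (∏ i, x i) x)) ∈
      (fundIdeal (FractionRing (MvPolynomial (Fin n) k))) ^ 2 ∧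
    Pf2Num (FractionRing (MvPolynomial (Fin n) k))
      (wclassOf (FractionRing (MvPolynomial (Fin n) k))
        (Fin.cons 1 (Fin.cons (∏ i, x i) x))) = n - 1 := by
  have hupper := pf2In_generic (hsq.map (algebraMap k _)) hev x
  exact ⟨mem_fundIdeal_sq_of_pf2In hupper,
    IsLeast.csInf_eq ⟨hupper, fun _ hr => sub_one_le_of_pf2In_generic hev hx hr⟩⟩

/-- For n ≥ 2 even, K = k(x₁,…,x_n), x₀ = x₁⋯x_n, the generic form
q₀' = ⟨1, x₀, x₁, …, x_n⟩ lies in I²(K) and Pf₂(q₀') = n − 1. -/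
theorem pf2_generic_even (k : Type*) [Field k] (hchar : ringChar k ≠ 2)
    (hsq : HasSqrtNegOne k) (n : ℕ) (hn : 2 ≤ n) (hev : Even n)
    (x : Fin n → (FractionRing (MvPolynomial (Fin n) k))ˣ)
    (hx : ∀ i, (x i : FractionRing (MvPolynomial (Fin n) k)) =
      algebraMap (MvPolynomial (Fin n) k) (FractionRing (MvPolynomial (Fin n) k))
        (MvPolynomial.X i)) :
    wclassOf (FractionRing (MvPolynomial (Fin n) k))
        (Fin.cons 1 (Fin.cons (∏ i, x i) x)) ∈
      (fundIdeal (FractionRing (MvPolynomial (Fin n) k))) ^ 2 ∧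
    Pf2Num (FractionRing (MvPolynomial (Fin n) k))
      (wclassOf (FractionRing (MvPolynomial (Fin n) k))
        (Fin.cons 1 (Fin.cons (∏ i, x i) x))) = n - 1 :=
  pf2_generic_even_general k hsq n hev x hx
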